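/- Let $F(\mathbf{x}) = \sum_{i=1}^4 A_i x_i^2$ with nonzero integer coefficients and let $\mathbf{c} \in \mathbb{Z}^4$. For every $q \in \mathbb{N}$, the exponential sum $S_q(\mathbf{c}) = \sum^{*}_{a \bmod q} \sum_{\mathbf{b} \bmod q} e_q(a F(\mathbf{b}) + \mathbf{b} \cdot \mathbf{c})$ satisfies $|S_q(\mathbf{c})| \ll q^3 \prod_{i=1}^4 \gcd(q, A_i, c_i)^{1/2}$ with an absolute implied constant. -/

import Mathlib

open Finset Complex

/-- `e_q(t) = exp(2πit/q)`. -/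
noncomputable def eq' (q : ℕ) (t : ℤ) : ℂ :=
  Complex.exp (2 * Real.pi * Complex.I * (t : ℂ) / (q : ℂ))

/-- The complete exponential sum `S_q(c)` attached to the diagonal quadratic form
`F(x) = ∑ A i * x i ^ 2`. -/
noncomputable def Sq (A c : Fin 4 → ℤ) (q : ℕ) : ℂ :=
  ∑ a ∈ (Finset.range q).filter (fun a => Nat.gcd a q = 1),
    ∑ b ∈ Fintype.piFinset (fun _ : Fin 4 => Finset.range q),
      eq' q ((a : ℤ) * (∑ i, A i * ((b i : ℤ)) ^ 2) + ∑ i, (b i : ℤ) * c i)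


lemma eq'_zero (q : ℕ) : eq' q 0 = 1 := by simp [eq']

lemma eq'_add (q : ℕ) (s t : ℤ) : eq' q (s + t) = eq' q s * eq' q t := by
  rw [eq', eq', eq', ← Complex.exp_add]
  congr 1
  push_cast
  ring

lemma eq'_abs (q : ℕ) (t : ℤ) : ‖eq' q t‖ = 1 := by
  have h : (2 * (Real.pi:ℂ) * Complex.I * (t : ℂ) / (q : ℂ)) =
      ((2 * Real.pi * t / q : ℝ) : ℂ) * Complex.I := by push_cast; ring
  rw [eq', h, Complex.norm_exp_ofReal_mul_I]

lemma eq'_conj (q : ℕ) (t : ℤ) : (starRingEnd ℂ) (eq' q t) = eq' q (-t) := by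
  rw [eq', eq', ← Complex.exp_conj]
  congr 1
  simp only [map_div₀, map_mul, Complex.conj_I, Complex.conj_ofNat, map_intCast, map_natCast]
  rw [Complex.conj_ofReal]
  push_cast
  ring

lemma eq'_pow (q : ℕ) (t : ℤ) (n : ℕ) : eq' q t ^ n = eq' q (t * n) := by
  rw [eq', eq', ← Complex.exp_nat_mul]
  congr 1
  push_cast
  ring

lemma eq'_eq_one_iff (q : ℕ) (hq : 0 < q) (t : ℤ) : eq' q t = 1 ↔ (q : ℤ) ∣ t := by
  rw [eq', Complex.exp_eq_one_iff]
  have hq' : (q : ℂ) ≠ 0 := by exact_mod_cast hq.ne'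
  have hpi : (2 * (Real.pi:ℂ) * Complex.I) ≠ 0 := by
    simp [Real.pi_ne_zero, Complex.I_ne_zero]
  constructor
  · rintro ⟨n, hn⟩
    refine ⟨n, ?_⟩
    have h1 : (2 * (Real.pi:ℂ) * Complex.I) * ((t:ℂ) / q) = (2 * (Real.pi:ℂ) * Complex.I) * n := by
      rw [← mul_div_assoc, hn]; ring
    have h2 : (t : ℂ) / q = n := mul_left_cancel₀ hpi h1
    have h3 : (t : ℂ) = q * n := by
      rw [div_eq_iff hq'] at h2; rw [h2]; ring
    exact_mod_cast h3
  · rintro ⟨n, rfl⟩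
    refine ⟨n, ?_⟩
    push_cast
    field_simp

lemma eq'_modeq (q : ℕ) {s t : ℤ} (h : s ≡ t [ZMOD q]) : eq' q s = eq' q t := by
  rcases Nat.eq_zero_or_pos q with rfl | hq
  · have : s = t := by simpa [Int.ModEq, Int.emod_zero] using h
    rw [this]
  · obtain ⟨k, hk⟩ := Int.ModEq.dvd h
    have ht : t = s + (q : ℤ) * k := by omega
    rw [ht, eq'_add, (eq'_eq_one_iff q hq _).2 ⟨k, rfl⟩, mul_one]

lemma sum_eq' (q : ℕ) (hq : 0 < q) (m : ℤ) :
    ∑ b ∈ Finset.range q, eq' q (m * b) = if (q : ℤ) ∣ m then (q : ℂ) else 0 := by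
  split_ifs with h
  · have : ∀ b ∈ Finset.range q, eq' q (m * b) = 1 := by
      intro b _
      exact (eq'_eq_one_iff q hq _).2 (h.mul_right _)
    rw [Finset.sum_congr rfl this]
    simp
  · have hz : eq' q m ≠ 1 := fun hc => h ((eq'_eq_one_iff q hq m).1 hc)
    have : ∀ b ∈ Finset.range q, eq' q (m * b) = eq' q m ^ b := by
      intro b _; rw [eq'_pow]
    rw [Finset.sum_congr rfl this, geom_sum_eq hz]
    have hpow : eq' q m ^ q = 1 := by
      rw [eq'_pow]
      exact (eq'_eq_one_iff q hq _).2 (dvd_mul_left _ m)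
    rw [hpow, sub_self, zero_div]

lemma sum_range_eq_sum_zmod (q : ℕ) [NeZero q] (F : ℕ → ℂ) :
    ∑ u ∈ Finset.range q, F u = ∑ x : ZMod q, F x.val := by
  refine Finset.sum_nbij' (fun u => (u : ZMod q)) (fun x => x.val) ?_ ?_ ?_ ?_ ?_
  · intros; exact Finset.mem_univ _
  · intro x _; exact Finset.mem_range.2 (ZMod.val_lt x)
  · intro u hu; exact ZMod.val_cast_of_lt (Finset.mem_range.1 hu)
  · intro x _; exact ZMod.natCast_rightInverse x
  · intro u hu; rw [ZMod.val_cast_of_lt (Finset.mem_range.1 hu)]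

lemma sum_range_shift (q : ℕ) (hq : 0 < q) (F : ℤ → ℂ)
    (hF : ∀ s t : ℤ, s ≡ t [ZMOD q] → F s = F t) (v : ℕ) :
    ∑ u ∈ Finset.range q, F u = ∑ h ∈ Finset.range q, F (v + h) := by
  haveI : NeZero q := ⟨hq.ne'⟩
  rw [sum_range_eq_sum_zmod q (fun u => F u), sum_range_eq_sum_zmod q (fun h => F (v + h))]
  rw [← Equiv.sum_comp (Equiv.addLeft (v : ZMod q)) (fun x => F x.val)]
  apply Fintype.sum_congr
  intro x
  apply hF
  have h1 : ((v : ZMod q) + x).val ≡ (v : ZMod q).val + x.val [MOD q] := by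
    rw [ZMod.val_add]; exact Nat.mod_modEq _ _
  have h2 : (v : ZMod q).val = v % q := ZMod.val_natCast q v
  have h3 : ((v : ZMod q) + x).val ≡ v + x.val [MOD q] := by
    rw [h2] at h1
    exact h1.trans (Nat.ModEq.add_right _ (Nat.mod_modEq v q))
  exact Int.natCast_modEq_iff.mpr h3

lemma card_dvd_bound (q : ℕ) (hq : 0 < q) (α : ℤ) :
    (((Finset.range q).filter (fun h : ℕ => (q:ℤ) ∣ 2*α*(h:ℤ))).card : ℝ) ≤ 2 * Int.gcd α q := by
  set m := (2*α).natAbs with hm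
  set g := Nat.gcd m q with hgdef
  have hgq : g ∣ q := Nat.gcd_dvd_right m q
  have hg : 0 < g := Nat.gcd_pos_of_pos_right m hq
  have hqg : 0 < q / g := Nat.div_pos (Nat.le_of_dvd hq hgq) hg
  have key : ∀ h ∈ (Finset.range q).filter (fun h : ℕ => (q:ℤ) ∣ 2*α*(h:ℤ)), (q/g) ∣ h := by
    intro h hh
    rw [Finset.mem_filter] at hh
    have hd : q ∣ m * h := by
      have h2 := hh.2
      rw [mul_assoc, Int.natCast_dvd] at h2
      simpa [Int.natAbs_mul, hm, mul_assoc] using h2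
    have hme : m * h = (m/g) * h * g := by
      rw [mul_assoc, mul_comm h g, ← mul_assoc, Nat.div_mul_cancel (Nat.gcd_dvd_left m q)]
    have h1 : (q/g) * g ∣ (m/g) * h * g := by
      rw [Nat.div_mul_cancel hgq, ← hme]; exact hd
    have hqdvd : (q/g) ∣ (m/g) * h := (Nat.mul_dvd_mul_iff_right hg).1 h1
    have hcop : Nat.Coprime (q/g) (m/g) := (Nat.coprime_div_gcd_div_gcd hg).symm
    exact hcop.dvd_of_dvd_mul_left hqdvd
  have hcard : ((Finset.range q).filter (fun h : ℕ => (q:ℤ) ∣ 2*α*(h:ℤ))).card ≤ g := by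
    have hsub : ((Finset.range q).filter (fun h : ℕ => (q:ℤ) ∣ 2*α*(h:ℤ))).card ≤
        (Finset.range g).card := by
      apply Finset.card_le_card_of_injOn (fun h => h / (q/g))
      · intro h hh
        refine Finset.mem_range.2 ?_
        have hlt : h < q := Finset.mem_range.1 (Finset.mem_filter.1 hh).1
        rw [Nat.div_lt_iff_lt_mul hqg]
        calc h < q := hlt
          _ = g * (q/g) := (Nat.mul_div_cancel' hgq).symm
      · intro h₁ hh₁ h₂ hh₂ hE
        have e1 : (q/g) * (h₁ / (q/g)) = h₁ := Nat.mul_div_cancel' (key _ hh₁)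
        have e2 : (q/g) * (h₂ / (q/g)) = h₂ := Nat.mul_div_cancel' (key _ hh₂)
        simp only at hE
        rw [← e1, ← e2, hE]
    simpa using hsub
  have hgle : g ≤ 2 * Int.gcd α q := by
    have hmeq : m = 2 * α.natAbs := by rw [hm, Int.natAbs_mul]; rfl
    have h2 : Nat.gcd (2*α.natAbs) q ∣ Nat.gcd (2*α.natAbs) (2*q) :=
      Nat.gcd_dvd_gcd_of_dvd_right _ (dvd_mul_left q 2)
    rw [Nat.gcd_mul_left] at h2
    have hpos : 0 < 2 * Nat.gcd α.natAbs q := by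
      have := Nat.gcd_pos_of_pos_right α.natAbs hq; omega
    have : g ∣ 2 * Nat.gcd α.natAbs q := by rw [hgdef, hmeq]; exact h2
    have hle := Nat.le_of_dvd hpos this
    have : Int.gcd α q = Nat.gcd α.natAbs q := by
      rw [Int.gcd]; simp
    omega
  calc (((Finset.range q).filter (fun h : ℕ => (q:ℤ) ∣ 2*α*(h:ℤ))).card : ℝ) ≤ (g : ℝ) := by
        exact_mod_cast hcard
    _ ≤ 2 * Int.gcd α q := by exact_mod_cast hgle

lemma Fmod (q : ℕ) (α c : ℤ) : ∀ s t : ℤ, s ≡ t [ZMOD q] →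
    eq' q (α*s^2 + c*s) = eq' q (α*t^2 + c*t) :=
  fun _ _ h => eq'_modeq q (((h.pow 2).mul_left α).add (h.mul_left c))

lemma gauss_vanish (q : ℕ) (hq : 0 < q) (α c : ℤ)
    (h : ¬ ((Int.gcd α q : ℤ) ∣ c)) :
    ∑ b ∈ Finset.range q, eq' q (α*(b:ℤ)^2 + c*(b:ℤ)) = 0 := by
  set d := Int.gcd α q with hd
  have hdq : d ∣ q := by
    have := Int.gcd_dvd_right (a := α) (b := (q:ℤ))
    exact_mod_cast this
  have hdpos : 0 < d := Int.gcd_pos_iff.2 (Or.inr (by exact_mod_cast hq.ne'))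
  set v := q / d with hv
  have hvq : d * v = q := Nat.mul_div_cancel' hdq
  have hvpos : 0 < v := Nat.div_pos (Nat.le_of_dvd hq hdq) hdpos
  have hqdv : (q:ℤ) = (d:ℤ) * v := by exact_mod_cast hvq.symm
  have hshift : ∀ b : ℤ, eq' q (α*((v:ℤ) + b)^2 + c*((v:ℤ) + b))
      = eq' q (c * v) * eq' q (α*b^2 + c*b) := by
    intro b
    rw [← eq'_add]
    apply eq'_modeq
    obtain ⟨α', hα'⟩ : ((d:ℤ)) ∣ α := Int.gcd_dvd_left α q
    have hdiff : α*((v:ℤ) + b)^2 + c*((v:ℤ) + b) - (c * v + (α*b^2 + c*b))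
        = (q:ℤ) * (α' * ((v:ℤ) + 2*b)) := by
      rw [hqdv, hα']; ring
    rw [Int.modEq_iff_dvd]
    refine ⟨-(α' * ((v:ℤ) + 2*b)), ?_⟩
    linear_combination -hdiff
  set G := ∑ b ∈ Finset.range q, eq' q (α*(b:ℤ)^2 + c*(b:ℤ)) with hG
  have hsum : G = eq' q (c * v) * G := by
    rw [hG]
    conv_lhs => rw [sum_range_shift q hq (fun b => eq' q (α*b^2 + c*b)) (Fmod q α c) v]
    rw [Finset.mul_sum]
    exact Finset.sum_congr rfl fun b _ => hshift b
  have hne : eq' q (c * v) ≠ 1 := by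
    intro hone
    rw [eq'_eq_one_iff q hq] at hone
    apply h
    obtain ⟨k, hk⟩ := hone
    have hv0 : (v:ℤ) ≠ 0 := by exact_mod_cast hvpos.ne'
    refine ⟨k, ?_⟩
    have hck : c * v = ((d:ℤ) * k) * v := by rw [hk, hqdv]; ring
    exact mul_right_cancel₀ hv0 hck
  by_contra hG0
  exact hne (mul_right_cancel₀ hG0 (by rw [one_mul, ← hsum]))

lemma gauss_sq (q : ℕ) (hq : 0 < q) (α c : ℤ) :
    ‖∑ b ∈ Finset.range q, eq' q (α*(b:ℤ)^2 + c*(b:ℤ))‖ ^ 2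
      ≤ q * (2 * Int.gcd α q) := by
  set F : ℤ → ℂ := fun b => eq' q (α*b^2 + c*b) with hF
  set G := ∑ b ∈ Finset.range q, F (b:ℤ) with hG
  have step1 : ‖G‖ ^ 2 = ‖G * (starRingEnd ℂ) G‖ := by
    rw [norm_mul, Complex.norm_conj, sq]
  have expand : G * (starRingEnd ℂ) G
      = ∑ h ∈ Finset.range q, eq' q (α*(h:ℤ)^2 + c*(h:ℤ)) *
          (if (q:ℤ) ∣ 2*α*(h:ℤ) then (q:ℂ) else 0) := by
    have hGconj : (starRingEnd ℂ) G = ∑ u ∈ Finset.range q, eq' q (-(α*(u:ℤ)^2 + c*(u:ℤ))) := by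
      rw [hG, map_sum]
      exact Finset.sum_congr rfl fun u _ => eq'_conj q _
    rw [mul_comm, hGconj, Finset.sum_mul]
    have inner : ∀ u ∈ Finset.range q,
        eq' q (-(α*(u:ℤ)^2 + c*(u:ℤ))) * G
          = ∑ h ∈ Finset.range q, eq' q (α*(h:ℤ)^2 + c*(h:ℤ)) * eq' q ((2*α*(h:ℤ)) * (u:ℤ)) := by
      intro u _
      rw [hG]
      conv_lhs => rw [sum_range_shift q hq F (Fmod q α c) u, Finset.mul_sum]
      refine Finset.sum_congr rfl fun b _ => ?_
      rw [hF]
      simp only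
      rw [← eq'_add, ← eq'_add]
      congr 1
      ring
    rw [Finset.sum_congr rfl inner, Finset.sum_comm]
    refine Finset.sum_congr rfl fun h _ => ?_
    rw [← Finset.mul_sum, sum_eq' q hq (2*α*(h:ℤ))]
  calc ‖G‖ ^ 2 = ‖G * (starRingEnd ℂ) G‖ := step1
    _ ≤ ∑ h ∈ Finset.range q, ‖eq' q (α*(h:ℤ)^2 + c*(h:ℤ)) *
          (if (q:ℤ) ∣ 2*α*(h:ℤ) then (q:ℂ) else 0)‖ := by
        rw [expand]; exact norm_sum_le _ _
    _ = ∑ h ∈ Finset.range q, (if (q:ℤ) ∣ 2*α*(h:ℤ) then (q:ℝ) else 0) := by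
        refine Finset.sum_congr rfl fun h _ => ?_
        rw [norm_mul, eq'_abs, one_mul]
        split_ifs with hcase
        · simp
        · simp
    _ = (((Finset.range q).filter (fun h : ℕ => (q:ℤ) ∣ 2*α*(h:ℤ))).card : ℝ) * q := by
        rw [← Finset.sum_filter, Finset.sum_const, nsmul_eq_mul]
    _ ≤ (2 * Int.gcd α q : ℝ) * q := by
        have := card_dvd_bound q hq α
        have hq0 : (0:ℝ) ≤ (q:ℝ) := by positivity
        exact mul_le_mul_of_nonneg_right this hq0
    _ = q * (2 * Int.gcd α q) := by ring

lemma Gi_bound (q : ℕ) (hq : 0 < q) (a : ℕ) (ha : Nat.gcd a q = 1) (A c : ℤ) :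
    ‖∑ b ∈ Finset.range q, eq' q ((a:ℤ)*A*(b:ℤ)^2 + (b:ℤ)*c)‖ ≤
      Real.sqrt 2 * Real.sqrt q * Real.sqrt (Nat.gcd q (Nat.gcd A.natAbs c.natAbs)) := by
  set α := (a:ℤ)*A with hα
  have hre : (∑ b ∈ Finset.range q, eq' q ((a:ℤ)*A*(b:ℤ)^2 + (b:ℤ)*c))
      = ∑ b ∈ Finset.range q, eq' q (α*(b:ℤ)^2 + c*(b:ℤ)) :=
    Finset.sum_congr rfl fun b _ => by rw [hα]; congr 1; ring
  rw [hre]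
  set d := Int.gcd α q with hd
  by_cases hdc : ((d:ℤ) ∣ c)
  · have hda : d = Nat.gcd A.natAbs q := by
      rw [hd, Int.gcd]
      have h1 : α.natAbs = a * A.natAbs := by rw [hα, Int.natAbs_mul]; simp
      rw [h1]
      have hcop : Nat.Coprime a q := ha
      simp only [Int.natAbs_natCast]
      exact hcop.gcd_mul_left_cancel A.natAbs
    have htarget : Nat.gcd q (Nat.gcd A.natAbs c.natAbs) = d := by
      rw [← Nat.gcd_assoc, Nat.gcd_comm q A.natAbs, ← hda]
      exact Nat.gcd_eq_left (Int.natCast_dvd.1 (by exact_mod_cast hdc))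
    rw [htarget]
    have h2 := gauss_sq q hq α c
    have habs : ‖∑ b ∈ Finset.range q, eq' q (α*(b:ℤ)^2 + c*(b:ℤ))‖
        ≤ Real.sqrt (q * (2*(d:ℝ))) := by
      rw [← Real.sqrt_sq (norm_nonneg _)]
      apply Real.sqrt_le_sqrt
      exact_mod_cast h2
    refine habs.trans (le_of_eq ?_)
    rw [show (q:ℝ) * (2*(d:ℝ)) = 2 * ((q:ℝ) * d) from by ring,
        Real.sqrt_mul (by norm_num), Real.sqrt_mul (by positivity)]
    ring
  · rw [gauss_vanish q hq α c (by rwa [← hd])]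
    simp only [norm_zero]
    positivity

lemma eq'_sum {ι : Type*} (q : ℕ) (s : Finset ι) (f : ι → ℤ) :
    eq' q (∑ i ∈ s, f i) = ∏ i ∈ s, eq' q (f i) := by
  classical
  induction s using Finset.cons_induction with
  | empty => simp [eq'_zero]
  | cons a s ha ih => rw [Finset.sum_cons, Finset.prod_cons, eq'_add, ih]

theorem stmt_6 : ∃ C : ℝ, 0 < C ∧ ∀ (A c : Fin 4 → ℤ), (∀ i, A i ≠ 0) → ∀ q : ℕ,
    ‖Sq A c q‖ ≤
      C * (q : ℝ) ^ 3 * ∏ i, Real.sqrt (Nat.gcd q (Nat.gcd (A i).natAbs (c i).natAbs)) := by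
  refine ⟨4, by norm_num, ?_⟩
  intro A c _ q
  rcases Nat.eq_zero_or_pos q with rfl | hq
  · have h0 : Sq A c 0 = 0 := by simp [Sq]
    rw [h0]
    simp
  · set P : ℝ := ∏ i, Real.sqrt (Nat.gcd q (Nat.gcd (A i).natAbs (c i).natAbs)) with hP
    have hPnn : 0 ≤ P := Finset.prod_nonneg fun i _ => Real.sqrt_nonneg _
    have key : ∀ a ∈ (Finset.range q).filter (fun a => Nat.gcd a q = 1),
        ‖∑ b ∈ Fintype.piFinset (fun _ : Fin 4 => Finset.range q),
          eq' q ((a : ℤ) * (∑ i, A i * ((b i : ℤ)) ^ 2) + ∑ i, (b i : ℤ) * c i)‖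
          ≤ (Real.sqrt 2 * Real.sqrt q)^4 * P := by
      intro a hamem
      have ha : Nat.gcd a q = 1 := (Finset.mem_filter.1 hamem).2
      have hsplit : (∑ b ∈ Fintype.piFinset (fun _ : Fin 4 => Finset.range q),
          eq' q ((a : ℤ) * (∑ i, A i * ((b i : ℤ)) ^ 2) + ∑ i, (b i : ℤ) * c i))
          = ∏ i, ∑ x ∈ Finset.range q, eq' q ((a:ℤ) * A i * (x:ℤ)^2 + (x:ℤ) * c i) := by
        rw [← Finset.sum_prod_piFinset]
        refine Finset.sum_congr rfl fun b _ => ?_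
        rw [← eq'_sum]
        congr 1
        rw [Finset.mul_sum, ← Finset.sum_add_distrib]
        exact Finset.sum_congr rfl fun i _ => by ring
      rw [hsplit, norm_prod]
      calc (∏ i, ‖∑ x ∈ Finset.range q, eq' q ((a:ℤ) * A i * (x:ℤ)^2 + (x:ℤ) * c i)‖)
          ≤ ∏ i, (Real.sqrt 2 * Real.sqrt q *
              Real.sqrt (Nat.gcd q (Nat.gcd (A i).natAbs (c i).natAbs))) :=
            Finset.prod_le_prod (fun i _ => norm_nonneg _)
              (fun i _ => Gi_bound q hq a ha (A i) (c i))
        _ = (Real.sqrt 2 * Real.sqrt q)^4 * P := by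
            rw [Finset.prod_mul_distrib, Finset.prod_const, Finset.card_univ, hP]
            simp
    have hcard : (((Finset.range q).filter (fun a => Nat.gcd a q = 1)).card : ℝ) ≤ q := by
      have := Finset.card_filter_le (Finset.range q) (fun a => Nat.gcd a q = 1)
      rw [Finset.card_range] at this
      exact_mod_cast this
    calc ‖Sq A c q‖
        ≤ ∑ a ∈ (Finset.range q).filter (fun a => Nat.gcd a q = 1),
            ‖∑ b ∈ Fintype.piFinset (fun _ : Fin 4 => Finset.range q),
              eq' q ((a : ℤ) * (∑ i, A i * ((b i : ℤ)) ^ 2) + ∑ i, (b i : ℤ) * c i)‖ := by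
          rw [Sq]; exact norm_sum_le _ _
      _ ≤ ∑ _a ∈ (Finset.range q).filter (fun a => Nat.gcd a q = 1),
            (Real.sqrt 2 * Real.sqrt q)^4 * P := Finset.sum_le_sum key
      _ = (((Finset.range q).filter (fun a => Nat.gcd a q = 1)).card : ℝ) *
            ((Real.sqrt 2 * Real.sqrt q)^4 * P) := by
          rw [Finset.sum_const, nsmul_eq_mul]
      _ ≤ (q:ℝ) * ((Real.sqrt 2 * Real.sqrt q)^4 * P) := by
          apply mul_le_mul_of_nonneg_right hcard
          positivity
      _ = 4 * (q:ℝ)^3 * P := by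
          have h2 : (Real.sqrt 2)^2 = 2 := Real.sq_sqrt (by norm_num)
          have hqq : (Real.sqrt q)^2 = (q:ℝ) := Real.sq_sqrt (by positivity)
          have hpow : (Real.sqrt 2 * Real.sqrt q)^4
              = ((Real.sqrt 2)^2)^2 * ((Real.sqrt q)^2)^2 := by ring
          rw [hpow, h2, hqq]; ring
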